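/- Let B = B'⊕B'', C = C'⊕C'' over a field k, let W' ⊆ B'⊗C' and W'' ⊆ B''⊗C'' be linear subspaces, W = W'⊕W'', and fix a minimal decomposition V of W with the associated minimal subspaces E', E'', F', F''. If at least one of E', E'', F', F'' is the zero subspace, then the additivity of the rank holds: R(W) = R(W') + R(W''). -/
import Mathlib


open TensorProduct Module

noncomputable section

variable (k : Type*) [Field k]

/-- The rank of a linear subspace `W ⊆ B⊗C`: the minimal number `r` of rank-one
tensors whose span contains `W`. -/
def sRank {B C : Type*} [AddCommGroup B] [Module k B]
    [AddCommGroup C] [Module k C] (W : Submodule k (B ⊗[k] C)) : ℕ :=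
  sInf {r : ℕ | ∃ (b : Fin r → B) (c : Fin r → C),
    W ≤ Submodule.span k (Set.range fun i => b i ⊗ₜ[k] c i)}

variable (B' B'' C' C'' : Type*)
  [AddCommGroup B'] [Module k B'] [AddCommGroup B''] [Module k B'']
  [AddCommGroup C'] [Module k C'] [AddCommGroup C''] [Module k C'']

/-- Inclusion of `B'⊗C'` into `(B'⊕B'')⊗(C'⊕C'')`. -/
def incl2L : (B' ⊗[k] C') →ₗ[k] ((B' × B'') ⊗[k] (C' × C'')) :=
  TensorProduct.map (LinearMap.inl k B' B'') (LinearMap.inl k C' C'')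

/-- Inclusion of `B''⊗C''` into `(B'⊕B'')⊗(C'⊕C'')`. -/
def incl2R : (B'' ⊗[k] C'') →ₗ[k] ((B' × B'') ⊗[k] (C' × C'')) :=
  TensorProduct.map (LinearMap.inr k B' B'') (LinearMap.inr k C' C'')

/-- The projection `π_{C'} : B⊗C → B⊗C''` with kernel `B⊗C'`. -/
def projC' : ((B' × B'') ⊗[k] (C' × C'')) →ₗ[k] ((B' × B'') ⊗[k] C'') :=
  TensorProduct.map LinearMap.id (LinearMap.snd k C' C'')

/-- The projection `π_{C''} : B⊗C → B⊗C'` with kernel `B⊗C''`. -/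
def projC'' : ((B' × B'') ⊗[k] (C' × C'')) →ₗ[k] ((B' × B'') ⊗[k] C') :=
  TensorProduct.map LinearMap.id (LinearMap.fst k C' C'')

/-- The projection `π_{B'} : B⊗C → B''⊗C` with kernel `B'⊗C`. -/
def projB' : ((B' × B'') ⊗[k] (C' × C'')) →ₗ[k] (B'' ⊗[k] (C' × C'')) :=
  TensorProduct.map (LinearMap.snd k B' B'') LinearMap.id

/-- The projection `π_{B''} : B⊗C → B'⊗C` with kernel `B''⊗C`. -/
def projB'' : ((B' × B'') ⊗[k] (C' × C'')) →ₗ[k] (B' ⊗[k] (C' × C'')) :=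
  TensorProduct.map (LinearMap.fst k B' B'') LinearMap.id

/-- `π_{C'}(V) ⊆ (E₀⊕B'')⊗C''` for a subspace `E₀ ⊆ B'`. -/
def CondE' (V : Submodule k ((B' × B'') ⊗[k] (C' × C''))) (E₀ : Submodule k B') : Prop :=
  Submodule.map (projC' k B' B'' C' C'') V ≤
    LinearMap.range (TensorProduct.map (E₀.prod (⊤ : Submodule k B'')).subtype
      (LinearMap.id : C'' →ₗ[k] C''))

/-- `π_{C''}(V) ⊆ (B'⊕E₀)⊗C'` for a subspace `E₀ ⊆ B''`. -/
def CondE'' (V : Submodule k ((B' × B'') ⊗[k] (C' × C''))) (E₀ : Submodule k B'') : Prop :=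
  Submodule.map (projC'' k B' B'' C' C'') V ≤
    LinearMap.range (TensorProduct.map ((⊤ : Submodule k B').prod E₀).subtype
      (LinearMap.id : C' →ₗ[k] C'))

/-- `π_{B'}(V) ⊆ B''⊗(F₀⊕C'')` for a subspace `F₀ ⊆ C'`. -/
def CondF' (V : Submodule k ((B' × B'') ⊗[k] (C' × C''))) (F₀ : Submodule k C') : Prop :=
  Submodule.map (projB' k B' B'' C' C'') V ≤
    LinearMap.range (TensorProduct.map (LinearMap.id : B'' →ₗ[k] B'')
      (F₀.prod (⊤ : Submodule k C'')).subtype)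

/-- `π_{B''}(V) ⊆ B'⊗(C'⊕F₀)` for a subspace `F₀ ⊆ C''`. -/
def CondF'' (V : Submodule k ((B' × B'') ⊗[k] (C' × C''))) (F₀ : Submodule k C'') : Prop :=
  Submodule.map (projB'' k B' B'' C' C'') V ≤
    LinearMap.range (TensorProduct.map (LinearMap.id : B' →ₗ[k] B')
      ((⊤ : Submodule k C').prod F₀).subtype)

section MyAux

variable {K M N : Type*} [Field K] [AddCommGroup M] [Module K M]
  [AddCommGroup N] [Module K N]

lemma myTmulEqZero {m : M} {n : N} (h : m ⊗ₜ[K] n = 0) : m = 0 ∨ n = 0 := by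
  by_cases hm : m = 0
  · exact Or.inl hm
  right
  rw [← Module.forall_dual_apply_eq_zero_iff K] at hm
  push_neg at hm
  obtain ⟨φ, hφ⟩ := hm
  have h2 := congrArg (fun x => TensorProduct.lid K N
    (TensorProduct.map φ (LinearMap.id : N →ₗ[K] N) x)) h
  simp only [TensorProduct.map_tmul, LinearMap.id_apply, map_zero,
    TensorProduct.lid_tmul] at h2
  rcases smul_eq_zero.mp h2 with h3 | h3
  · exact absurd h3 hφ
  · exact h3

lemma mySRankLe (W : Submodule K (M ⊗[K] N)) (T : Finset (M ⊗[K] N))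
    (hT : ∀ t ∈ T, ∃ b c, t = b ⊗ₜ[K] c)
    (hW : W ≤ Submodule.span K (T : Set (M ⊗[K] N))) : sRank K W ≤ T.card := by
  classical
  choose f g hfg using hT
  apply Nat.sInf_le
  refine ⟨fun i => f _ (T.equivFin.symm i).2, fun i => g _ (T.equivFin.symm i).2, ?_⟩
  refine le_trans hW (Submodule.span_le.mpr ?_)
  intro t ht
  apply Submodule.subset_span
  refine ⟨T.equivFin ⟨t, ht⟩, ?_⟩
  simp only [Equiv.symm_apply_apply]
  exact (hfg t ht).symm

lemma myWitness [FiniteDimensional K M] [FiniteDimensional K N]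
    (W : Submodule K (M ⊗[K] N)) :
    ∃ (b : Fin (sRank K W) → M) (c : Fin (sRank K W) → N),
      W ≤ Submodule.span K (Set.range fun i => b i ⊗ₜ[K] c i) := by
  have hne : {r : ℕ | ∃ (b : Fin r → M) (c : Fin r → N),
      W ≤ Submodule.span K (Set.range fun i => b i ⊗ₜ[K] c i)}.Nonempty := by
    classical
    set bM := Module.finBasis K M
    set bN := Module.finBasis K N
    refine ⟨Module.finrank K M * Module.finrank K N,
      fun i => bM (finProdFinEquiv.symm i).1, fun i => bN (finProdFinEquiv.symm i).2, ?_⟩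
    have hrange : (Set.range fun i =>
        bM (finProdFinEquiv.symm i).1 ⊗ₜ[K] bN (finProdFinEquiv.symm i).2)
        = Set.range (bM.tensorProduct bN) := by
      have : (fun i => bM (finProdFinEquiv.symm i).1 ⊗ₜ[K] bN (finProdFinEquiv.symm i).2)
          = (bM.tensorProduct bN) ∘ finProdFinEquiv.symm := by
        funext i
        simp [Basis.tensorProduct_apply']
      rw [this, Set.range_comp, Equiv.range_eq_univ, Set.image_univ]
    rw [hrange, (bM.tensorProduct bN).span_eq]
    exact le_top
  exact Nat.sInf_mem hne

end MyAux

/-- Given a minimal decomposition `V` of `W = W'⊕W''` with associated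
minimal spaces `E', E'', F', F''`, if at least one of `E', E'', F', F''` is the zero
subspace, then the additivity of the rank holds: `R(W) = R(W') + R(W'')`. -/
theorem rank_additivity_of_trivial_sticking_out_space
    [FiniteDimensional k B'] [FiniteDimensional k B''] [FiniteDimensional k C']
    [FiniteDimensional k C'']
    (W' : Submodule k (B' ⊗[k] C')) (W'' : Submodule k (B'' ⊗[k] C''))
    (W V : Submodule k ((B' × B'') ⊗[k] (C' × C'')))
    (hW : W = Submodule.map (incl2L k B' B'' C' C'') W' ⊔
      Submodule.map (incl2R k B' B'' C' C'') W'')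
    (hWV : W ≤ V)
    (hVdim : finrank k V = sRank k W)
    (hVspan : ∃ S : Set ((B' × B'') ⊗[k] (C' × C'')),
      (∀ v ∈ S, ∃ b c, v = b ⊗ₜ[k] c) ∧ V = Submodule.span k S)
    (E' : Submodule k B') (E'' : Submodule k B'') (F' : Submodule k C') (F'' : Submodule k C'')
    (hE' : CondE' k B' B'' C' C'' V E' ∧
      ∀ E₀ : Submodule k B', CondE' k B' B'' C' C'' V E₀ → E' ≤ E₀)
    (hE'' : CondE'' k B' B'' C' C'' V E'' ∧
      ∀ E₀ : Submodule k B'', CondE'' k B' B'' C' C'' V E₀ → E'' ≤ E₀)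
    (hF' : CondF' k B' B'' C' C'' V F' ∧
      ∀ F₀ : Submodule k C', CondF' k B' B'' C' C'' V F₀ → F' ≤ F₀)
    (hF'' : CondF'' k B' B'' C' C'' V F'' ∧
      ∀ F₀ : Submodule k C'', CondF'' k B' B'' C' C'' V F₀ → F'' ≤ F₀)
    (htriv : E' = ⊥ ∨ E'' = ⊥ ∨ F' = ⊥ ∨ F'' = ⊥) :
    sRank k W = sRank k W' + sRank k W'' := by
  classical
  obtain ⟨S, hS1, hS2⟩ := hVspan
  set p : ((B' × B'') ⊗[k] (C' × C'')) →ₗ[k] (B' ⊗[k] C') :=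
    TensorProduct.map (LinearMap.fst k B' B'') (LinearMap.fst k C' C'') with hp
  set q : ((B' × B'') ⊗[k] (C' × C'')) →ₗ[k] (B'' ⊗[k] C'') :=
    TensorProduct.map (LinearMap.snd k B' B'') (LinearMap.snd k C' C'') with hq
  -- Upper bound: subadditivity
  have hub : sRank k W ≤ sRank k W' + sRank k W'' := by
    obtain ⟨b1, c1, h1⟩ := myWitness W'
    obtain ⟨b2, c2, h2⟩ := myWitness W''
    apply Nat.sInf_le
    refine ⟨Fin.append (fun i => LinearMap.inl k B' B'' (b1 i))
        (fun i => LinearMap.inr k B' B'' (b2 i)),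
      Fin.append (fun i => LinearMap.inl k C' C'' (c1 i))
        (fun i => LinearMap.inr k C' C'' (c2 i)), ?_⟩
    rw [hW]
    apply sup_le
    · refine le_trans (Submodule.map_mono h1) ?_
      rw [Submodule.map_span]
      apply Submodule.span_mono
      rintro x ⟨_, ⟨i, rfl⟩, rfl⟩
      refine ⟨Fin.castAdd _ i, ?_⟩
      simp [incl2L, Fin.append_left]
    · refine le_trans (Submodule.map_mono h2) ?_
      rw [Submodule.map_span]
      apply Submodule.span_mono
      rintro x ⟨_, ⟨i, rfl⟩, rfl⟩
      refine ⟨Fin.natAdd _ i, ?_⟩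
      simp [incl2R, Fin.append_right]
  -- Step A: one of the two "cross" projections kills V
  have hkill :
      (∀ v ∈ V, TensorProduct.map (LinearMap.fst k B' B'') (LinearMap.snd k C' C'') v = 0)
      ∨ (∀ v ∈ V, TensorProduct.map (LinearMap.snd k B' B'') (LinearMap.fst k C' C'') v = 0) := by
    rcases htriv with h | h | h | h
    · left
      intro v hv
      rw [h] at hE'
      obtain ⟨w, hw⟩ := hE'.1 (Submodule.mem_map_of_mem (f := projC' k B' B'' C' C'') hv)
      have hcomp : TensorProduct.map (LinearMap.fst k B' B'') (LinearMap.snd k C' C'') v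
          = TensorProduct.map (LinearMap.fst k B' B'') LinearMap.id
            (projC' k B' B'' C' C'' v) := by
        rw [projC', ← LinearMap.comp_apply, ← TensorProduct.map_comp,
          LinearMap.comp_id, LinearMap.id_comp]
      rw [hcomp, ← hw, ← LinearMap.comp_apply, ← TensorProduct.map_comp]
      have hzero : (LinearMap.fst k B' B'') ∘ₗ
          (((⊥ : Submodule k B').prod (⊤ : Submodule k B'')).subtype) = 0 := by
        ext x
        exact (Submodule.mem_bot k).mp x.2.1
      rw [hzero, TensorProduct.map_zero_left]
      rfl
    · right
      intro v hv
      rw [h] at hE''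
      obtain ⟨w, hw⟩ := hE''.1 (Submodule.mem_map_of_mem (f := projC'' k B' B'' C' C'') hv)
      have hcomp : TensorProduct.map (LinearMap.snd k B' B'') (LinearMap.fst k C' C'') v
          = TensorProduct.map (LinearMap.snd k B' B'') LinearMap.id
            (projC'' k B' B'' C' C'' v) := by
        rw [projC'', ← LinearMap.comp_apply, ← TensorProduct.map_comp,
          LinearMap.comp_id, LinearMap.id_comp]
      rw [hcomp, ← hw, ← LinearMap.comp_apply, ← TensorProduct.map_comp]
      have hzero : (LinearMap.snd k B' B'') ∘ₗ
          (((⊤ : Submodule k B').prod (⊥ : Submodule k B'')).subtype) = 0 := by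
        ext x
        exact (Submodule.mem_bot k).mp x.2.2
      rw [hzero, TensorProduct.map_zero_left]
      rfl
    · right
      intro v hv
      rw [h] at hF'
      obtain ⟨w, hw⟩ := hF'.1 (Submodule.mem_map_of_mem (f := projB' k B' B'' C' C'') hv)
      have hcomp : TensorProduct.map (LinearMap.snd k B' B'') (LinearMap.fst k C' C'') v
          = TensorProduct.map LinearMap.id (LinearMap.fst k C' C'')
            (projB' k B' B'' C' C'' v) := by
        rw [projB', ← LinearMap.comp_apply, ← TensorProduct.map_comp,
          LinearMap.comp_id, LinearMap.id_comp]
      rw [hcomp, ← hw, ← LinearMap.comp_apply, ← TensorProduct.map_comp]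
      have hzero : (LinearMap.fst k C' C'') ∘ₗ
          (((⊥ : Submodule k C').prod (⊤ : Submodule k C'')).subtype) = 0 := by
        ext x
        exact (Submodule.mem_bot k).mp x.2.1
      rw [hzero, TensorProduct.map_zero_right]
      rfl
    · left
      intro v hv
      rw [h] at hF''
      obtain ⟨w, hw⟩ := hF''.1 (Submodule.mem_map_of_mem (f := projB'' k B' B'' C' C'') hv)
      have hcomp : TensorProduct.map (LinearMap.fst k B' B'') (LinearMap.snd k C' C'') v
          = TensorProduct.map LinearMap.id (LinearMap.snd k C' C'')
            (projB'' k B' B'' C' C'' v) := by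
        rw [projB'', ← LinearMap.comp_apply, ← TensorProduct.map_comp,
          LinearMap.comp_id, LinearMap.id_comp]
      rw [hcomp, ← hw, ← LinearMap.comp_apply, ← TensorProduct.map_comp]
      have hzero : (LinearMap.snd k C' C'') ∘ₗ
          (((⊤ : Submodule k C').prod (⊥ : Submodule k C'')).subtype) = 0 := by
        ext x
        exact (Submodule.mem_bot k).mp x.2.2
      rw [hzero, TensorProduct.map_zero_right]
      rfl
  -- Step B: every rank-one spanning element is killed by p or by q
  have hpq : ∀ s ∈ S, p s = 0 ∨ q s = 0 := by
    intro s hs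
    obtain ⟨b, c, rfl⟩ := hS1 s hs
    have hsV : b ⊗ₜ[k] c ∈ V := hS2 ▸ Submodule.subset_span hs
    rcases hkill with hk | hk
    · have h0 := hk _ hsV
      rw [TensorProduct.map_tmul] at h0
      rcases myTmulEqZero h0 with h1 | h1
      · left
        rw [hp, TensorProduct.map_tmul]
        simp only [LinearMap.fst_apply] at h1 ⊢
        rw [h1, TensorProduct.zero_tmul]
      · right
        rw [hq, TensorProduct.map_tmul]
        simp only [LinearMap.snd_apply] at h1 ⊢
        rw [h1, TensorProduct.tmul_zero]
    · have h0 := hk _ hsV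
      rw [TensorProduct.map_tmul] at h0
      rcases myTmulEqZero h0 with h1 | h1
      · right
        rw [hq, TensorProduct.map_tmul]
        simp only [LinearMap.snd_apply] at h1 ⊢
        rw [h1, TensorProduct.zero_tmul]
      · left
        rw [hp, TensorProduct.map_tmul]
        simp only [LinearMap.fst_apply] at h1 ⊢
        rw [h1, TensorProduct.tmul_zero]
  -- Step C: extract a basis of V from S
  obtain ⟨t, hts, htspan, htli⟩ := exists_linearIndependent k S
  have htfin : t.Finite := htli.setFinite
  haveI : Fintype t := htfin.fintype
  set T : Finset ((B' × B'') ⊗[k] (C' × C'')) := t.toFinset with hTdef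
  have hspanV : Submodule.span k t = V := by rw [htspan, ← hS2]
  have hcard : T.card = sRank k W := by
    have h1 : Module.finrank k (Submodule.span k t) = T.card :=
      finrank_span_set_eq_card htli
    rw [hspanV] at h1
    rw [← h1, hVdim]
  set T1 : Finset ((B' × B'') ⊗[k] (C' × C'')) := T.filter (fun s => ¬ p s = 0) with hT1
  set T2 : Finset ((B' × B'') ⊗[k] (C' × C'')) := T.filter (fun s => p s = 0) with hT2
  have hcards : T2.card + T1.card = T.card :=
    Finset.card_filter_add_card_filter_not (p := fun s => p s = 0)
  have htS : ∀ s ∈ t, s ∈ S := fun s hs => hts hs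
  have htmem : ∀ s ∈ t, s ∈ T := fun s hs => Set.mem_toFinset.mpr hs
  have hTt : ∀ s ∈ T, s ∈ t := fun s hs => Set.mem_toFinset.mp hs
  -- identity compositions
  have hpL : p ∘ₗ incl2L k B' B'' C' C'' = LinearMap.id := by
    rw [hp, incl2L, ← TensorProduct.map_comp]
    simp only [LinearMap.fst_comp_inl]
    exact TensorProduct.map_id
  have hqR : q ∘ₗ incl2R k B' B'' C' C'' = LinearMap.id := by
    rw [hq, incl2R, ← TensorProduct.map_comp]
    simp only [LinearMap.snd_comp_inr]
    exact TensorProduct.map_id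
  -- bound for W'
  have hb1 : sRank k W' ≤ T1.card := by
    have hW'le : W' ≤ Submodule.span k ((T1.image p : Finset (B' ⊗[k] C')) :
        Set (B' ⊗[k] C')) := by
      have step1 : W' = Submodule.map p (Submodule.map (incl2L k B' B'' C' C'') W') := by
        rw [← Submodule.map_comp, hpL, Submodule.map_id]
      have step2 : Submodule.map (incl2L k B' B'' C' C'') W' ≤ V :=
        le_trans (hW ▸ le_sup_left) hWV
      have step3 : Submodule.map p V ≤
          Submodule.span k ((T1.image p : Finset (B' ⊗[k] C')) : Set (B' ⊗[k] C')) := by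
        rw [← hspanV, Submodule.map_span]
        apply Submodule.span_le.mpr
        rintro x ⟨s, hs, rfl⟩
        by_cases h0 : p s = 0
        · rw [h0]; exact Submodule.zero_mem _
        · apply Submodule.subset_span
          simp only [Finset.coe_image, Set.mem_image]
          exact ⟨s, Finset.mem_filter.mpr ⟨htmem s hs, h0⟩, rfl⟩
      rw [step1]
      exact le_trans (Submodule.map_mono step2) step3
    refine le_trans (mySRankLe W' (T1.image p) ?_ hW'le) (Finset.card_image_le)
    intro u hu
    obtain ⟨s, hs, rfl⟩ := Finset.mem_image.mp hu
    obtain ⟨b, c, rfl⟩ := hS1 s (htS s (hTt s (Finset.mem_of_mem_filter s hs)))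
    exact ⟨b.1, c.1, by rw [hp, TensorProduct.map_tmul]; rfl⟩
  -- bound for W''
  have hb2 : sRank k W'' ≤ T2.card := by
    have hW''le : W'' ≤ Submodule.span k ((T2.image q : Finset (B'' ⊗[k] C'')) :
        Set (B'' ⊗[k] C'')) := by
      have step1 : W'' = Submodule.map q (Submodule.map (incl2R k B' B'' C' C'') W'') := by
        rw [← Submodule.map_comp, hqR, Submodule.map_id]
      have step2 : Submodule.map (incl2R k B' B'' C' C'') W'' ≤ V :=
        le_trans (hW ▸ le_sup_right) hWV
      have step3 : Submodule.map q V ≤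
          Submodule.span k ((T2.image q : Finset (B'' ⊗[k] C'')) : Set (B'' ⊗[k] C'')) := by
        rw [← hspanV, Submodule.map_span]
        apply Submodule.span_le.mpr
        rintro x ⟨s, hs, rfl⟩
        by_cases h0 : p s = 0
        · apply Submodule.subset_span
          simp only [Finset.coe_image, Set.mem_image]
          exact ⟨s, Finset.mem_filter.mpr ⟨htmem s hs, h0⟩, rfl⟩
        · have hq0 : q s = 0 := (hpq s (htS s hs)).resolve_left h0
          rw [hq0]; exact Submodule.zero_mem _
      rw [step1]
      exact le_trans (Submodule.map_mono step2) step3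
    refine le_trans (mySRankLe W'' (T2.image q) ?_ hW''le) (Finset.card_image_le)
    intro u hu
    obtain ⟨s, hs, rfl⟩ := Finset.mem_image.mp hu
    obtain ⟨b, c, rfl⟩ := hS1 s (htS s (hTt s (Finset.mem_of_mem_filter s hs)))
    exact ⟨b.2, c.2, by rw [hq, TensorProduct.map_tmul]; rfl⟩
  have hlb : sRank k W' + sRank k W'' ≤ sRank k W := by
    calc sRank k W' + sRank k W'' ≤ T1.card + T2.card := add_le_add hb1 hb2
      _ = T.card := by omega
      _ = sRank k W := hcard
  omega
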